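/- arXiv:1206.4771 — 5 statements merged into one kernel-verified Lean document; each statement's English description precedes it below -/
import Mathlib

section
/- Let k > 0 and v_a ∈ (0, 1/√(1+k)). Then v_a/√(1 - k·v_a²) > v_a. Consequently, in the asymmetric first-price auction with bid functions b_a(v) = v/(1+√(1-kv²)) and b_c(v) = v/(1+√(1+kv²)), there exist value pairs (v_a, v_c) with v_c > v_a such that b_a(v_a) > b_c(v_c), so the weaker-valued bidder wins and the allocation is inefficient. -/
open Real

theorem asymmetric_auction_inefficient (k : ℝ) (hk : 0 < k) :
    (∀ va : ℝ, 0 < va → va < 1 / Real.sqrt (1 + k) →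
      va / Real.sqrt (1 - k * va ^ 2) > va) ∧
    ∃ va vc : ℝ, 0 < va ∧ va < 1 / Real.sqrt (1 + k) ∧ 0 < vc ∧ vc ≤ 1 ∧
      vc > va ∧
      va / (1 + Real.sqrt (1 - k * va ^ 2)) > vc / (1 + Real.sqrt (1 + k * vc ^ 2)) := by
  have h1k : (0:ℝ) < 1 + k := by linarith
  set S := Real.sqrt (1 + k) with hSdef
  have hS0 : 0 < S := Real.sqrt_pos.mpr h1k
  have hS2 : S ^ 2 = 1 + k := Real.sq_sqrt h1k.le
  constructor
  · intro v hv0 hv1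
    have hvS : v * S < 1 := by
      have := (lt_div_iff₀ hS0).mp hv1
      linarith
    have hkv : k * v ^ 2 < 1 := by
      nlinarith [sq_nonneg v, mul_pos hv0 hS0, sq_nonneg (1 - v*S)]
    have hkv0 : 0 < k * v ^ 2 := by positivity
    set s := Real.sqrt (1 - k * v ^ 2) with hsdef
    have hs2 : s ^ 2 = 1 - k * v ^ 2 := Real.sq_sqrt (by linarith)
    have hs0 : 0 < s := Real.sqrt_pos.mpr (by linarith)
    have hs1 : s < 1 := by nlinarith
    rw [gt_iff_lt, lt_div_iff₀ hs0]
    nlinarith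
  · set va := 1 / (2 * S) with hva
    have hva0 : 0 < va := by positivity
    have hva2 : va ^ 2 = 1 / (4 * (1 + k)) := by
      rw [hva, div_pow]; rw [mul_pow, hS2]; ring_nf
    set u := k * va ^ 2 with hu
    have hu0 : 0 < u := by positivity
    have hu4 : u < 1/4 := by
      rw [hu, hva2]
      rw [mul_one_div, div_lt_div_iff₀ (by linarith) (by norm_num)]
      linarith
    set vc := va * (1 + u / 8) with hvc
    have hvc0 : 0 < vc := by positivity
    have hvagt : va < vc := by nlinarith
    have hva1 : va ≤ 1/2 := by
      rw [hva, div_le_div_iff₀ (by positivity) (by norm_num)]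
      nlinarith [Real.one_le_sqrt.mpr (by linarith : (1:ℝ) ≤ 1 + k)]
    have hvc1 : vc ≤ 1 := by nlinarith
    refine ⟨va, vc, hva0, ?_, hvc0, hvc1, hvagt, ?_⟩
    · rw [div_lt_div_iff₀ (by positivity) hS0]; nlinarith
    · -- b_a(va) ≥ va/(2 - u/2) and b_c(vc) ≤ vc/2
      set s := Real.sqrt (1 - u) with hs
      have hs2 : s ^ 2 = 1 - u := Real.sq_sqrt (by linarith)
      have hs0 : 0 ≤ s := Real.sqrt_nonneg _
      have hsle : s ≤ 1 - u / 2 := by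
        have : (1 - u : ℝ) ≤ (1 - u/2)^2 := by nlinarith
        calc s ≤ Real.sqrt ((1 - u/2)^2) := Real.sqrt_le_sqrt this
          _ = 1 - u/2 := by rw [Real.sqrt_sq (by linarith)]
      set t := Real.sqrt (1 + k * vc ^ 2) with ht
      have ht1 : 1 ≤ t := Real.one_le_sqrt.mpr (by nlinarith)
      have hba : va / (2 - u/2) ≤ va / (1 + s) := by
        apply div_le_div_of_nonneg_left hva0.le (by linarith) (by linarith)
      have hbc : vc / (1 + t) ≤ vc / 2 := by
        apply div_le_div_of_nonneg_left hvc0.le (by norm_num) (by linarith)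
      have hmid : vc / 2 < va / (2 - u/2) := by
        rw [div_lt_div_iff₀ (by norm_num) (by linarith)]
        nlinarith
      calc vc / (1 + t) ≤ vc / 2 := hbc
        _ < va / (2 - u/2) := hmid
        _ ≤ va / (1 + s) := hba
end

section
/- The unique solution on (0,1] of the ODE v - b(v) - v·b'(v) - v²/(1+v) = 0 with boundary condition lim_{v→0+} b(v) = 0 is b(v) = 1 - ln(1+v)/v. -/
open Real Set Filter Topology

/-! The equation says `(v * b v)' = v - v ^ 2 / (1 + v) = v / (1 + v) = (v - log (1 + v))'`, so the
first integral `v * b v - v + log (1 + v)` is constant on `(0, 1]`. As `b` has a finite limit at `0⁺`,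
this constant is the first integral's limit `0` there, and `v * b v = v - log (1 + v)` is the formula. -/

theorem eq_of_hasDerivAt_zero_of_tendsto_nhdsGT {g : ℝ → ℝ} {a c L : ℝ}
    (hg : ∀ x ∈ Ioc a c, HasDerivAt g 0 x) (hlim : Tendsto g (𝓝[>] a) (𝓝 L)) :
    ∀ x ∈ Ioc a c, g x = L := by
  intro x hx
  have hconst : ∀ y ∈ Ioc a x, g y = g x := by
    intro y hy
    have hsub : Icc y x ⊆ Ioc a c := fun z hz => ⟨hy.1.trans_le hz.1, hz.2.trans hx.2⟩
    exact (constant_of_has_deriv_right_zero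
      (fun z hz => (hg z (hsub hz)).continuousAt.continuousWithinAt)
      (fun z hz => (hg z (hsub (Ico_subset_Icc_self hz))).hasDerivWithinAt) x
      ⟨hy.2, le_rfl⟩).symm
  have hlim_x : Tendsto g (𝓝[>] a) (𝓝 (g x)) :=
    tendsto_const_nhds.congr' <| eventually_of_mem (Ioo_mem_nhdsGT hx.1) fun y hy =>
      (hconst y (Ioo_subset_Ioc_self hy)).symm
  exact tendsto_nhds_unique hlim_x hlim

noncomputable def firstIntegral (b : ℝ → ℝ) (v : ℝ) : ℝ := v * b v - v + log (1 + v)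

theorem hasDerivAt_firstIntegral {b : ℝ → ℝ} {d v : ℝ} (hv : 1 + v ≠ 0) (hb : HasDerivAt b d v)
    (hode : v - b v - v * d - v ^ 2 / (1 + v) = 0) : HasDerivAt (firstIntegral b) 0 v := by
  have hlog : HasDerivAt (fun x => log (1 + x)) (1 / (1 + v)) v := by
    simpa using ((hasDerivAt_id v).const_add 1).log hv
  have h : HasDerivAt (fun x => x * b x - x + log (1 + x)) (1 * b v + v * d - 1 + 1 / (1 + v)) v :=
    (((hasDerivAt_id' v).mul hb).sub (hasDerivAt_id' v)).add hlog
  refine h.congr_deriv ?_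
  field_simp at hode ⊢
  linear_combination -hode

theorem tendsto_firstIntegral_nhdsGT_zero {b : ℝ → ℝ} {L : ℝ} (hb : Tendsto b (𝓝[>] 0) (𝓝 L)) :
    Tendsto (firstIntegral b) (𝓝[>] 0) (𝓝 0) := by
  have hid : Tendsto (fun x : ℝ => x) (𝓝[>] 0) (𝓝 0) := tendsto_nhdsWithin_of_tendsto_nhds tendsto_id
  have hlog : Tendsto (fun x : ℝ => log (1 + x)) (𝓝[>] 0) (𝓝 (log (1 + 0))) :=
    tendsto_nhdsWithin_of_tendsto_nhds <|
      ((continuous_const.add continuous_id).continuousAt.log (by norm_num)).tendsto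
  show Tendsto (fun x => x * b x - x + log (1 + x)) _ _
  simpa using ((hid.mul hb).sub hid).add hlog

theorem ODE_unique_solution (b b' : ℝ → ℝ)
    (hode : ∀ v ∈ Set.Ioc (0 : ℝ) 1,
      HasDerivAt b (b' v) v ∧ v - b v - v * b' v - v ^ 2 / (1 + v) = 0)
    (hbc : Filter.Tendsto b (nhdsWithin 0 (Set.Ioi 0)) (nhds 0)) :
    ∀ v ∈ Set.Ioc (0 : ℝ) 1, b v = 1 - Real.log (1 + v) / v := by
  intro v hv
  have hderiv : ∀ x ∈ Ioc (0 : ℝ) 1, HasDerivAt (firstIntegral b) 0 x := fun x hx =>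
    hasDerivAt_firstIntegral (by linarith [hx.1]) (hode x hx).1 (hode x hx).2
  have hv_zero : firstIntegral b v = 0 :=
    eq_of_hasDerivAt_zero_of_tendsto_nhdsGT hderiv (tendsto_firstIntegral_nhdsGT_zero hbc) v hv
  unfold firstIntegral at hv_zero
  field_simp [hv.1.ne']
  linarith
end

section
/- Let v > 0 and let P ≥ 0 be a random variable (the opposing price). If a bidder draws bid t with density f(t) = 1/(v - t) on [0, (1 - 1/e)v], independently of P, and obtains utility v - t when t > P and 0 otherwise, then the bidder's expected utility is at least (1 - 1/e)·v - E[P]. -/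
/-! Against a fixed price `p ≥ 0`, the density `1 / (v - t)` exactly cancels the utility `v - t`
of a winning bid, so the expected utility is the length of `(p, (1 - 1/e) v)`, that is
`max ((1 - 1/e) v - p) 0 ≥ (1 - 1/e) v - p`. Taking expectations over `P` gives the bound. -/

open Real MeasureTheory Set

lemma ite_sub_mul_one_div_sub_eq_indicator {p t v : ℝ} (htv : t < v) :
    (if p < t then v - t else 0) * (1 / (v - t)) = (Ioi p).indicator 1 t := by
  have hvt : v - t ≠ 0 := (sub_pos.mpr htv).ne'
  by_cases hpt : p < t
  · rw [if_pos hpt, indicator_of_mem (mem_Ioi.mpr hpt)]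
    field_simp
    rfl
  · rw [if_neg hpt, indicator_of_notMem (by simpa using hpt), zero_mul]

lemma setIntegral_Ioo_indicator_Ioi_one {a c p : ℝ} (hap : a ≤ p) :
    ∫ t in Ioo a c, (Ioi p).indicator (1 : ℝ → ℝ) t = max (c - p) 0 := by
  have hinter : Ioo a c ∩ Ioi p = Ioo p c := by
    rw [inter_comm, Ioi_inter_Ioo, max_eq_left hap]
  rw [setIntegral_indicator measurableSet_Ioi, hinter, Pi.one_def, setIntegral_const,
    Real.volume_real_Ioo, smul_eq_mul, mul_one]

lemma setIntegral_deviation_utility {a c p v : ℝ} (hcv : c ≤ v) (hap : a ≤ p) :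
    ∫ t in Ioo a c, (if p < t then v - t else 0) * (1 / (v - t)) = max (c - p) 0 := by
  rw [← setIntegral_Ioo_indicator_Ioi_one (c := c) hap]
  exact setIntegral_congr_fun measurableSet_Ioo fun t ht =>
    ite_sub_mul_one_div_sub_eq_indicator (ht.2.trans_le hcv)

lemma sub_integral_le_integral_max_sub_zero {Ω : Type*} [MeasurableSpace Ω] {μ : Measure Ω}
    [IsProbabilityMeasure μ] {f : Ω → ℝ} (hf : Integrable f μ) (c : ℝ) :
    c - ∫ ω, f ω ∂μ ≤ ∫ ω, max (c - f ω) 0 ∂μ := by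
  have hsub : Integrable (fun ω => c - f ω) μ := (integrable_const c).sub hf
  calc c - ∫ ω, f ω ∂μ = ∫ ω, (c - f ω) ∂μ := by
        rw [integral_sub (integrable_const c) hf, integral_const, probReal_univ, one_smul]
    _ ≤ ∫ ω, max (c - f ω) 0 ∂μ := integral_mono hsub hsub.pos_part fun ω => le_max_left _ _

theorem smoothness_deviation_lemma (v : ℝ) (hv : 0 < v)
    {Ω : Type*} [MeasurableSpace Ω] (μ : Measure Ω) [IsProbabilityMeasure μ]
    (P : Ω → ℝ) (hP0 : ∀ ω, 0 ≤ P ω) (hPint : Integrable P μ) :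
    ∫ ω, (∫ t in Set.Ioo (0 : ℝ) ((1 - 1 / Real.exp 1) * v),
        (if P ω < t then v - t else 0) * (1 / (v - t))) ∂μ ≥
      (1 - 1 / Real.exp 1) * v - ∫ ω, P ω ∂μ := by
  have hcv : (1 - 1 / Real.exp 1) * v ≤ v := by
    have : 0 < 1 / Real.exp 1 := by positivity
    nlinarith
  have hpointwise : ∀ ω, ∫ t in Ioo (0 : ℝ) ((1 - 1 / Real.exp 1) * v),
      (if P ω < t then v - t else 0) * (1 / (v - t)) = max ((1 - 1 / Real.exp 1) * v - P ω) 0 :=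
    fun ω => setIntegral_deviation_utility hcv (hP0 ω)
  simp_rw [hpointwise]
  exact sub_integral_le_integral_max_sub_zero hPint _
end

section
/- Fix v > 0. The function g: ℝ≥0 → ℝ defined by g(p) = max over distributions D on [0, v] of E_{t∼D}[(v - t)·1{t > p}] satisfies: the specific distribution with density 1/(v-t) on [0, (1-1/e)v] guarantees E[(v-t)·1{t>p}] ≥ (1-1/e)·v - p simultaneously for all p ≥ 0, and no single distribution can guarantee E[(v-t)·1{t>p}] ≥ c·v - p for all p ≥ 0 with constant c > 1 - 1/e. -/
/-!
Against the density `1 / (v - t)` on `(0, B)`, `B = (1 - 1/e) v`, a winning bid has utility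
density exactly `1`, so the expected utility at price `p` is the length `B - p` of `(p, B)`.

For optimality, integrate the guarantee `c v - p ≤ E[u(p, t)]` against the weight `(v - p)⁻²`
on `(0, B)`. After Fubini, each bid `t ∈ [0, v]` collects
`(v - t) ((v - min B t)⁻¹ - v⁻¹) ≤ 1 - u(0, t) / v`, whose expectation the guarantee at `p = 0`
bounds by `1 - c`. The weighted left side is `log (v / (v - B)) - (1 - c) v ((v - B)⁻¹ - v⁻¹)`,
which for `B = (1 - 1/e) v` equals `1 - (1 - c) (e - 1)`; hence `c ≤ 1 - 1/e`.
-/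

open Real MeasureTheory Set

noncomputable def bidUtility (v p t : ℝ) : ℝ := if p < t then v - t else 0

lemma bidUtility_mem_Icc {v p t : ℝ} (ht : t ≤ v) : bidUtility v p t ∈ Icc 0 (v - t) := by
  unfold bidUtility
  split_ifs <;> constructor <;> linarith

lemma norm_bidUtility_le {v p t : ℝ} (ht : t ∈ Icc 0 v) : ‖bidUtility v p t‖ ≤ v := by
  obtain ⟨h0, hle⟩ := bidUtility_mem_Icc (p := p) ht.2
  rw [norm_of_nonneg h0]
  linarith [ht.1]

lemma measurable_bidUtility (v : ℝ) : Measurable fun q : ℝ × ℝ => bidUtility v q.1 q.2 :=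
  Measurable.ite (measurableSet_lt measurable_fst measurable_snd)
    (measurable_const.sub measurable_snd) measurable_const

lemma setIntegral_bidUtility_mul_density {v B p : ℝ} (hBv : B ≤ v) (hp : 0 ≤ p) :
    ∫ t in Ioo 0 B, bidUtility v p t * (1 / (v - t)) = max (B - p) 0 := by
  have h : EqOn (fun t => bidUtility v p t * (1 / (v - t))) ((Ioi p).indicator fun _ => 1)
      (Ioo 0 B) := by
    intro t ht
    have hvt : v - t ≠ 0 := by linarith [ht.2]
    by_cases hpt : p < t <;> simp [bidUtility, hpt, hvt]
  rw [setIntegral_congr_fun measurableSet_Ioo h, setIntegral_indicator measurableSet_Ioi,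
    Ioo_inter_Ioi, max_eq_right hp, setIntegral_const, volume_real_Ioo, smul_eq_mul, mul_one]

lemma setIntegral_Ioo_eq_sub_of_hasDerivAt {f f' : ℝ → ℝ} {a b : ℝ} (hab : a ≤ b)
    (hderiv : ∀ x ∈ Icc a b, HasDerivAt f (f' x) x) (hcont : ContinuousOn f' (Icc a b)) :
    ∫ x in Ioo a b, f' x = f b - f a := by
  rw [← integral_Ioc_eq_integral_Ioo, ← intervalIntegral.integral_of_le hab]
  exact intervalIntegral.integral_eq_sub_of_hasDerivAt (by rwa [uIcc_of_le hab])
    (hcont.intervalIntegrable_of_Icc hab)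

lemma hasDerivAt_inv_sub {v x : ℝ} (hx : v - x ≠ 0) :
    HasDerivAt (fun p => (v - p)⁻¹) ((v - x) ^ 2)⁻¹ x := by
  refine (((hasDerivAt_id' x).const_sub v).inv hx).congr_deriv ?_
  simp

lemma continuousOn_inv_sub_sq {v B : ℝ} (hBv : B < v) :
    ContinuousOn (fun p => ((v - p) ^ 2)⁻¹) (Icc 0 B) :=
  ContinuousOn.inv₀ (by fun_prop) fun x hx => pow_ne_zero 2 (by linarith [hx.2])

lemma continuousOn_guarantee_mul_weight {v B : ℝ} (c : ℝ) (hBv : B < v) :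
    ContinuousOn (fun p => (c * v - p) * ((v - p) ^ 2)⁻¹) (Icc 0 B) :=
  (continuous_const.sub continuous_id).continuousOn.mul (continuousOn_inv_sub_sq hBv)

lemma integral_inv_sub_sq {v m : ℝ} (hm : 0 ≤ m) (hmv : m < v) :
    ∫ p in Ioo 0 m, ((v - p) ^ 2)⁻¹ = (v - m)⁻¹ - v⁻¹ := by
  rw [setIntegral_Ioo_eq_sub_of_hasDerivAt hm
    (fun x hx => hasDerivAt_inv_sub (by linarith [hx.2])) (continuousOn_inv_sub_sq hmv), sub_zero]

lemma integral_guarantee_mul_weight {v B : ℝ} (c : ℝ) (hB : 0 ≤ B) (hBv : B < v) :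
    ∫ p in Ioo 0 B, (c * v - p) * ((v - p) ^ 2)⁻¹ =
      log (v / (v - B)) - (1 - c) * v * ((v - B)⁻¹ - v⁻¹) := by
  have hderiv : ∀ x ∈ Icc 0 B, HasDerivAt (fun p => -log (v - p) - (1 - c) * v * (v - p)⁻¹)
      ((c * v - x) * ((v - x) ^ 2)⁻¹) x := by
    intro x hx
    have hx : v - x ≠ 0 := by linarith [hx.2]
    refine ((((hasDerivAt_id' x).const_sub v).log hx).neg.sub
      ((hasDerivAt_inv_sub hx).const_mul _)).congr_deriv ?_
    field_simp
    ring
  rw [setIntegral_Ioo_eq_sub_of_hasDerivAt hB hderiv (continuousOn_guarantee_mul_weight c hBv),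
    log_div (by linarith) (by linarith), sub_zero]
  ring

section Optimality

variable {v B : ℝ}

lemma setIntegral_bidUtility_mul_weight {t : ℝ} (hB : 0 ≤ B) (hBv : B < v) (ht : 0 ≤ t) :
    ∫ p in Ioo 0 B, bidUtility v p t * ((v - p) ^ 2)⁻¹ =
      (v - t) * ((v - min B t)⁻¹ - v⁻¹) := by
  have h : EqOn (fun p => bidUtility v p t * ((v - p) ^ 2)⁻¹)
      ((Iio t).indicator fun p => (v - t) * ((v - p) ^ 2)⁻¹) (Ioo 0 B) := by
    intro p _
    by_cases hpt : p < t <;> simp [bidUtility, hpt]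
  rw [setIntegral_congr_fun measurableSet_Ioo h, setIntegral_indicator measurableSet_Iio,
    Ioo_inter_Iio, integral_const_mul,
    integral_inv_sub_sq (le_min hB ht) ((min_le_left _ _).trans_lt hBv)]

lemma setIntegral_bidUtility_mul_weight_le {t : ℝ} (hB : 0 ≤ B) (hBv : B < v)
    (ht : t ∈ Icc 0 v) :
    ∫ p in Ioo 0 B, bidUtility v p t * ((v - p) ^ 2)⁻¹ ≤ 1 - bidUtility v 0 t / v := by
  have hv : 0 < v := by linarith
  have hm : 0 < v - min B t := by linarith [min_le_left B t]
  have hle_one : (v - t) / (v - min B t) ≤ 1 :=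
    div_le_one_of_le₀ (by linarith [min_le_right B t]) hm.le
  have hutil : bidUtility v 0 t / v ≤ (v - t) / v :=
    div_le_div_of_nonneg_right (bidUtility_mem_Icc ht.2).2 hv.le
  rw [setIntegral_bidUtility_mul_weight hB hBv ht.1, mul_sub, ← div_eq_mul_inv,
    ← div_eq_mul_inv]
  linarith

lemma integrable_bidUtility {D : Measure ℝ} [IsFiniteMeasure D] (hD : ∀ᵐ t ∂D, t ∈ Icc 0 v)
    (p : ℝ) : Integrable (bidUtility v p) D :=
  Integrable.of_bound ((measurable_bidUtility v).comp
    (measurable_const.prodMk measurable_id)).aestronglyMeasurable v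
    (by filter_upwards [hD] with t ht using norm_bidUtility_le ht)

lemma integrable_bidUtility_mul_weight {D : Measure ℝ} [IsFiniteMeasure D]
    (hD : ∀ᵐ t ∂D, t ∈ Icc 0 v) (hBv : B < v) :
    Integrable (Function.uncurry fun p t => bidUtility v p t * ((v - p) ^ 2)⁻¹)
      ((volume.restrict (Ioo 0 B)).prod D) := by
  have hbox : ∀ᵐ q ∂(volume.restrict (Ioo 0 B)).prod D, q ∈ Ioo 0 B ×ˢ Icc 0 v := by
    rw [← Measure.restrict_eq_self_of_ae_mem hD, Measure.prod_restrict]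
    exact ae_restrict_mem (measurableSet_Ioo.prod measurableSet_Icc)
  refine Integrable.of_bound (((measurable_bidUtility v).mul
    ((measurable_const.sub measurable_fst).pow_const 2).inv).aestronglyMeasurable)
    (v * ((v - B) ^ 2)⁻¹) ?_
  filter_upwards [hbox] with ⟨p, t⟩ ⟨hp, ht⟩
  have hweight : ((v - p) ^ 2)⁻¹ ≤ ((v - B) ^ 2)⁻¹ :=
    inv_anti₀ (by nlinarith [hp.2]) (by nlinarith [hp.1, hp.2])
  rw [Function.uncurry_apply_pair, norm_mul,
    norm_of_nonneg (inv_nonneg.mpr (sq_nonneg (v - p)))]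
  exact mul_le_mul (norm_bidUtility_le ht) hweight (by positivity) (by linarith [ht.1, ht.2])

theorem weighted_guarantee_le {c : ℝ} {D : Measure ℝ} [IsProbabilityMeasure D]
    (hD : ∀ᵐ t ∂D, t ∈ Icc 0 v) (hB : 0 ≤ B) (hBv : B < v)
    (hguar : ∀ p, 0 ≤ p → c * v - p ≤ ∫ t, bidUtility v p t ∂D) :
    log (v / (v - B)) - (1 - c) * v * ((v - B)⁻¹ - v⁻¹) ≤ 1 - c := by
  have hv : 0 < v := by linarith
  have hF := integrable_bidUtility_mul_weight hD hBv
  calc log (v / (v - B)) - (1 - c) * v * ((v - B)⁻¹ - v⁻¹)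
      = ∫ p in Ioo 0 B, (c * v - p) * ((v - p) ^ 2)⁻¹ :=
        (integral_guarantee_mul_weight c hB hBv).symm
    _ ≤ ∫ p in Ioo 0 B, ∫ t, bidUtility v p t * ((v - p) ^ 2)⁻¹ ∂D := by
        refine setIntegral_mono_on ?_ hF.integral_prod_left measurableSet_Ioo fun p hp => ?_
        · exact (continuousOn_guarantee_mul_weight c hBv).integrableOn_Icc.mono_set
            Ioo_subset_Icc_self
        · rw [integral_mul_const]
          exact mul_le_mul_of_nonneg_right (hguar p hp.1.le) (by positivity)
    _ = ∫ t, (∫ p in Ioo 0 B, bidUtility v p t * ((v - p) ^ 2)⁻¹) ∂D :=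
        integral_integral_swap hF
    _ ≤ ∫ t, (1 - bidUtility v 0 t / v) ∂D := by
        refine integral_mono_ae hF.integral_prod_right
          ((integrable_const 1).sub ((integrable_bidUtility hD 0).div_const v)) ?_
        filter_upwards [hD] with t ht using setIntegral_bidUtility_mul_weight_le hB hBv ht
    _ = 1 - (∫ t, bidUtility v 0 t ∂D) / v := by
        rw [integral_sub (integrable_const 1) ((integrable_bidUtility hD 0).div_const v),
          integral_const, probReal_univ, one_smul, integral_div]
    _ ≤ 1 - c := by
        have := (le_div_iff₀ hv).mpr (by simpa using hguar 0 le_rfl)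
        linarith

end Optimality

lemma one_div_exp_one_lt_one : 1 / exp 1 < 1 := by
  rw [one_div, ← exp_neg, exp_lt_one_iff]
  norm_num

theorem optimal_bid_distribution (v : ℝ) (hv : 0 < v) :
    (∀ p : ℝ, 0 ≤ p →
      ∫ t in Set.Ioo (0 : ℝ) ((1 - 1 / Real.exp 1) * v),
          (if p < t then v - t else 0) * (1 / (v - t)) ≥
        (1 - 1 / Real.exp 1) * v - p) ∧
    ∀ (D : Measure ℝ), IsProbabilityMeasure D → D (Set.Icc 0 v)ᶜ = 0 →
      ∀ c : ℝ, 1 - 1 / Real.exp 1 < c →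
        ¬ (∀ p : ℝ, 0 ≤ p →
          ∫ t, (if p < t then v - t else 0) ∂D ≥ c * v - p) := by
  have hB : 0 ≤ (1 - 1 / exp 1) * v := by nlinarith [one_div_exp_one_lt_one]
  have hBv : (1 - 1 / exp 1) * v < v := by nlinarith [one_div_pos.mpr (exp_pos 1)]
  refine ⟨fun p hp => ?_, fun D _ hD c hc hguar => ?_⟩
  · exact (setIntegral_bidUtility_mul_density hBv.le hp).trans_ge (le_max_left _ _)
  · have h := weighted_guarantee_le (ae_iff.mpr hD) hB hBv hguar
    have hvB : v / (v - (1 - 1 / exp 1) * v) = exp 1 := by field_simp; ring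
    have hweight : v * ((v - (1 - 1 / exp 1) * v)⁻¹ - v⁻¹) = exp 1 - 1 := by
      field_simp
      ring
    rw [hvB, log_exp, mul_assoc, hweight] at h
    have hc' : exp 1 - 1 < c * exp 1 := by
      simpa [sub_mul, exp_ne_zero] using mul_lt_mul_of_pos_right hc (exp_pos 1)
    linarith
end

section
/- Let u(x) = x·(v - b(x)) + ∫_x^1 s(v, t) dt where b(x) = 1 - ln(1+x)/x and s(v,t) = v²/(1 + √(1 - ((1/t²) - 1)·v²)) for v ≤ t ≤ 1. Then for each v ∈ (0,1], the function u is maximized over x ∈ [v, 1] at x = v. -/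
open Real

/-- Continuation utility of a first-round loser with value `v` against a winner
of value `t`. -/
noncomputable def contU (v t : ℝ) : ℝ :=
  v ^ 2 / (1 + Real.sqrt (1 - (1 / t ^ 2 - 1) * v ^ 2))

/-- Expected first-round utility of a bidder with value `v` bidding as type `x`. -/
noncomputable def firstRoundU (v x : ℝ) : ℝ :=
  x * (v - (1 - Real.log (1 + x) / x)) + ∫ t in x..1, contU v t

lemma key_ineq (v t : ℝ) (hv : 0 < v) (hvt : v ≤ t) (ht : t ≤ 1) :
    v - 1 + 1 / (1 + t) ≤ contU v t := by
  have ht0 : 0 < t := lt_of_lt_of_le hv hvt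
  have ht1 : (0:ℝ) < 1 + t := by linarith
  have ht2 : (0:ℝ) < t ^ 2 := by positivity
  set a : ℝ := 1 - (1 / t ^ 2 - 1) * v ^ 2 with ha
  have hat : a * t ^ 2 = t ^ 2 - (1 - t ^ 2) * v ^ 2 := by
    rw [ha]; field_simp
  have ha0 : 0 ≤ a := by
    have : 0 ≤ t ^ 2 - (1 - t ^ 2) * v ^ 2 := by nlinarith
    nlinarith
  set s : ℝ := Real.sqrt a with hs
  have hs0 : 0 ≤ s := Real.sqrt_nonneg a
  have hs2 : s ^ 2 = a := Real.sq_sqrt ha0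
  have hden : (0:ℝ) < 1 + s := by linarith
  unfold contU
  rw [← ha, ← hs, le_div_iff₀ hden]
  have e : v - 1 + 1 / (1 + t) = (v * (1 + t) - t) / (1 + t) := by
    field_simp; ring
  rw [e, div_mul_eq_mul_div, div_le_iff₀ ht1]
  set g : ℝ := v * (1 + t) - t with hg
  rcases le_or_gt g 0 with hgle | hgpos
  · nlinarith
  · set f : ℝ := (1 + t) * v ^ 2 - (1 + t) * v + t with hf
    have hfpos : 0 < f := by
      have h1 : 0 ≤ (t - v) * (1 - g) := by
        apply mul_nonneg (by linarith)
        nlinarith [mul_nonneg (by linarith : (0:ℝ) ≤ 1 - v) (le_of_lt ht1)]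
      nlinarith [mul_pos (mul_pos ht1 ht0) hgpos]
    have hsle : s ≤ f / g := by
      rw [hs]
      have h2 : a ≤ (f / g) ^ 2 := by
        rw [div_pow, le_div_iff₀ (by positivity)]
        have hkey : (t ^ 2 - (1 - t ^ 2) * v ^ 2) * g ^ 2
            + (v * (1 + t) * (t - v)) ^ 2 = t ^ 2 * f ^ 2 := by
          rw [hg, hf]; ring
        have h3 : a * g ^ 2 * t ^ 2 ≤ f ^ 2 * t ^ 2 := by
          nlinarith [sq_nonneg (v * (1 + t) * (t - v))]
        exact le_of_mul_le_mul_right h3 ht2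
      calc Real.sqrt a ≤ Real.sqrt ((f / g) ^ 2) := Real.sqrt_le_sqrt h2
        _ = f / g := Real.sqrt_sq (by positivity)
    have hsg : s * g ≤ f := (le_div_iff₀ hgpos).mp hsle
    nlinarith

lemma contU_contOn (v : ℝ) (hv : 0 < v) :
    ContinuousOn (contU v) (Set.Icc v 1) := by
  unfold contU
  apply ContinuousOn.div continuousOn_const
  · apply ContinuousOn.add continuousOn_const
    apply Real.continuous_sqrt.comp_continuousOn
    apply ContinuousOn.sub continuousOn_const
    apply ContinuousOn.mul _ continuousOn_const
    apply ContinuousOn.sub _ continuousOn_const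
    apply ContinuousOn.div continuousOn_const (by fun_prop)
    intro t ht
    have : 0 < t := lt_of_lt_of_le hv ht.1
    positivity
  · intro t ht
    have := Real.sqrt_nonneg (1 - (1 / t ^ 2 - 1) * v ^ 2)
    positivity

theorem truthful_type_optimal (v : ℝ) (hv : v ∈ Set.Ioc (0 : ℝ) 1) :
    ∀ x ∈ Set.Icc v 1, firstRoundU v x ≤ firstRoundU v v := by
  obtain ⟨hv0, hv1⟩ := hv
  intro x hx
  obtain ⟨hvx, hx1⟩ := hx
  have hx0 : 0 < x := lt_of_lt_of_le hv0 hvx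
  have hc := contU_contOn v hv0
  have hint1 : IntervalIntegrable (contU v) MeasureTheory.volume v x :=
    (hc.mono (by rw [Set.uIcc_of_le hvx]; exact Set.Icc_subset_Icc le_rfl hx1)).intervalIntegrable
  have hint2 : IntervalIntegrable (contU v) MeasureTheory.volume x 1 :=
    (hc.mono (by rw [Set.uIcc_of_le hx1]; exact Set.Icc_subset_Icc hvx le_rfl)).intervalIntegrable
  have hsplit : (∫ t in v..x, contU v t) + ∫ t in x..1, contU v t
      = ∫ t in v..1, contU v t :=
    intervalIntegral.integral_add_adjacent_intervals hint1 hint2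
  -- the comparison integrand
  have hlow : ContinuousOn (fun t : ℝ => v - 1 + 1 / (1 + t)) (Set.Icc v x) := by
    apply ContinuousOn.add continuousOn_const
    apply ContinuousOn.div continuousOn_const (by fun_prop)
    intro t ht
    have : v ≤ t := ht.1
    intro h; nlinarith
  have hlowint : IntervalIntegrable (fun t : ℝ => v - 1 + 1 / (1 + t))
      MeasureTheory.volume v x := by
    apply ContinuousOn.intervalIntegrable
    rwa [Set.uIcc_of_le hvx]
  have hmono : (∫ t in v..x, (v - 1 + 1 / (1 + t))) ≤ ∫ t in v..x, contU v t := by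
    apply intervalIntegral.integral_mono_on hvx hlowint hint1
    intro t ht
    exact key_ineq v t hv0 ht.1 (le_trans ht.2 hx1)
  -- compute the lower integral
  have hshift : (∫ t in v..x, 1 / (1 + t)) = Real.log (1 + x) - Real.log (1 + v) := by
    have h1 : (∫ t in v..x, (fun u : ℝ => 1 / u) (t + 1))
        = ∫ u in (v+1)..(x+1), 1 / u := intervalIntegral.integral_comp_add_right _ 1
    have h2 : (∫ u in (v+1)..(x+1), 1 / u) = Real.log ((x+1) / (v+1)) := by
      apply integral_one_div
      intro h
      rw [Set.uIcc_of_le (by linarith)] at h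
      have := h.1; linarith
    have h3 : Real.log ((x+1)/(v+1)) = Real.log (1 + x) - Real.log (1 + v) := by
      rw [Real.log_div (by linarith) (by linarith)]
      ring_nf
    have h4 : (∫ t in v..x, 1 / (1 + t)) = ∫ t in v..x, (fun u : ℝ => 1 / u) (t + 1) := by
      congr 1; ext t; rw [add_comm]
    rw [h4, h1, h2, h3]
  have hcomp : (∫ t in v..x, (v - 1 + 1 / (1 + t)))
      = (x - v) * (v - 1) + (Real.log (1 + x) - Real.log (1 + v)) := by
    rw [intervalIntegral.integral_add (intervalIntegrable_const) ?_, hshift,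
      intervalIntegral.integral_const]
    · simp [smul_eq_mul]
    · apply ContinuousOn.intervalIntegrable
      rw [Set.uIcc_of_le hvx]
      apply ContinuousOn.div continuousOn_const (by fun_prop)
      intro t ht
      have : v ≤ t := ht.1
      intro h; nlinarith
  -- rewrite firstRoundU
  have e1 : x * (v - (1 - Real.log (1 + x) / x)) = x * (v - 1) + Real.log (1 + x) := by
    field_simp
    ring
  have e2 : v * (v - (1 - Real.log (1 + v) / v)) = v * (v - 1) + Real.log (1 + v) := by
    field_simp
    ring
  unfold firstRoundU
  rw [e1, e2, ← hsplit]
  have : (x - v) * (v - 1) + (Real.log (1 + x) - Real.log (1 + v))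
      ≤ ∫ t in v..x, contU v t := by rw [← hcomp]; exact hmono
  linarith
end
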